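/- Let Γ : (0,∞)³ → (0,∞) be monotonically increasing, homogeneous of degree 1 in (V, W), and subhomogeneous in S. Let S, V, W : (a,b) → (0,∞) with S_max ≤ ξ·S_min, V_max ≤ ξ·V_min, W_max ≤ ξ·W_min for ξ ≥ 1. Then for any recorded space value s_b with S_min ≤ s_b ≤ S_max: Γ(s_b, ∫_a^b V, ∫_a^b W) ≤ ξ²·∫_a^b Γ(S(t), V(t), W(t)) dt. -/

import Mathlib

open MeasureTheory

/-- Infimum of a resource over a block timespan (a,b). -/
noncomputable def blockInf (f : ℝ → ℝ) (a b : ℝ) : ℝ := sInf (f '' Set.Ioo a b)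

/-- Supremum of a resource over a block timespan (a,b). -/
noncomputable def blockSup (f : ℝ → ℝ) (a b : ℝ) : ℝ := sSup (f '' Set.Ioo a b)

/-!
On the block every resource lies between its infimum and ξ times it, so ∫V and ∫W are at most
ξ (b - a) times the infima of V and W, and s_b is at most ξ times the infimum of S. Monotonicity,
homogeneity in (V, W) and subhomogeneity in S therefore bound Γ(s_b, ∫V, ∫W) by
ξ² (b - a) Γ(inf S, inf V, inf W), and by monotonicity again (b - a) Γ(inf S, inf V, inf W) is at
most ∫ Γ(S, V, W).
-/

open Set intervalIntegral

section BlockBounds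

variable {f : ℝ → ℝ} {a b t : ℝ}

-- `sInf` of a real set that is empty or unbounded below is `0`.
theorem bddBelow_of_blockInf_pos (h : 0 < blockInf f a b) : BddBelow (f '' Ioo a b) := by
  by_contra hbdd
  exact h.ne' (Real.sInf_of_not_bddBelow hbdd)

theorem blockInf_le (h : 0 < blockInf f a b) (ht : t ∈ Ioo a b) : blockInf f a b ≤ f t :=
  csInf_le (bddBelow_of_blockInf_pos h) (mem_image_of_mem f ht)

theorem le_blockSup (h : BddAbove (f '' Ioo a b)) (ht : t ∈ Ioo a b) : f t ≤ blockSup f a b :=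
  le_csSup h (mem_image_of_mem f ht)

end BlockBounds

section IntervalIntegralBounds

variable {f : ℝ → ℝ} {a b c : ℝ}

theorem mul_le_intervalIntegral_of_le_Ioo (hab : a ≤ b) (hf : IntervalIntegrable f volume a b)
    (h : ∀ t ∈ Ioo a b, c ≤ f t) : (b - a) * c ≤ ∫ t in a..b, f t := by
  simpa using integral_mono_on_of_le_Ioo hab intervalIntegrable_const hf h

theorem intervalIntegral_le_mul_of_le_Ioo (hab : a ≤ b) (hf : IntervalIntegrable f volume a b)
    (h : ∀ t ∈ Ioo a b, f t ≤ c) : ∫ t in a..b, f t ≤ (b - a) * c := by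
  simpa using integral_mono_on_of_le_Ioo hab hf intervalIntegrable_const h

theorem mul_blockInf_le_intervalIntegral (hab : a ≤ b) (hf : IntervalIntegrable f volume a b)
    (hinf : 0 < blockInf f a b) : (b - a) * blockInf f a b ≤ ∫ t in a..b, f t :=
  mul_le_intervalIntegral_of_le_Ioo hab hf fun _ ht => blockInf_le hinf ht

theorem intervalIntegral_pos_of_blockInf_pos (hab : a < b) (hf : IntervalIntegrable f volume a b)
    (hinf : 0 < blockInf f a b) : 0 < ∫ t in a..b, f t :=
  (mul_pos (sub_pos.2 hab) hinf).trans_le (mul_blockInf_le_intervalIntegral hab.le hf hinf)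

theorem intervalIntegral_le_mul_blockInf {ξ : ℝ} (hab : a ≤ b)
    (hf : IntervalIntegrable f volume a b) (hbdd : BddAbove (f '' Ioo a b))
    (hsmooth : blockSup f a b ≤ ξ * blockInf f a b) :
    ∫ t in a..b, f t ≤ ξ * (b - a) * blockInf f a b := by
  calc ∫ t in a..b, f t ≤ (b - a) * blockSup f a b :=
        intervalIntegral_le_mul_of_le_Ioo hab hf fun _ ht => le_blockSup hbdd ht
    _ ≤ (b - a) * (ξ * blockInf f a b) := by gcongr
    _ = ξ * (b - a) * blockInf f a b := by ring

end IntervalIntegralBounds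

theorem le_sq_mul_of_le_mul (Γ : ℝ → ℝ → ℝ → ℝ)
    (hmono : ∀ s v w s' v' w' : ℝ, 0 < s → 0 < v → 0 < w →
      s ≤ s' → v ≤ v' → w ≤ w' → Γ s v w ≤ Γ s' v' w')
    (hhom : ∀ s v w α : ℝ, 0 < s → 0 < v → 0 < w → 0 < α →
      Γ s (α * v) (α * w) = α * Γ s v w)
    (hsub : ∀ s v w α : ℝ, 0 < s → 0 < v → 0 < w → 1 ≤ α →
      Γ (α * s) v w ≤ α * Γ s v w)
    {ξ c s v w s₀ v₀ w₀ : ℝ} (hξ : 1 ≤ ξ) (hc : 0 < c)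
    (hs₀ : 0 < s₀) (hv₀ : 0 < v₀) (hw₀ : 0 < w₀) (hs : 0 < s) (hv : 0 < v) (hw : 0 < w)
    (hss₀ : s ≤ ξ * s₀) (hvv₀ : v ≤ ξ * c * v₀) (hww₀ : w ≤ ξ * c * w₀) :
    Γ s v w ≤ ξ ^ 2 * (c * Γ s₀ v₀ w₀) := by
  have hξ₀ : 0 < ξ := one_pos.trans_le hξ
  calc Γ s v w ≤ Γ (ξ * s₀) (ξ * c * v₀) (ξ * c * w₀) :=
        hmono _ _ _ _ _ _ hs hv hw hss₀ hvv₀ hww₀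
    _ = ξ * c * Γ (ξ * s₀) v₀ w₀ := hhom _ _ _ _ (by positivity) hv₀ hw₀ (by positivity)
    _ ≤ ξ * c * (ξ * Γ s₀ v₀ w₀) := by gcongr; exact hsub _ _ _ _ hs₀ hv₀ hw₀ hξ
    _ = ξ ^ 2 * (c * Γ s₀ v₀ w₀) := by ring

theorem stmt_14_general (Γ : ℝ → ℝ → ℝ → ℝ)
    (hmono : ∀ s v w s' v' w' : ℝ, 0 < s → 0 < v → 0 < w →
      s ≤ s' → v ≤ v' → w ≤ w' → Γ s v w ≤ Γ s' v' w')
    (hhom : ∀ s v w α : ℝ, 0 < s → 0 < v → 0 < w → 0 < α →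
      Γ s (α * v) (α * w) = α * Γ s v w)
    (hsub : ∀ s v w α : ℝ, 0 < s → 0 < v → 0 < w → 1 ≤ α →
      Γ (α * s) v w ≤ α * Γ s v w)
    (a b : ℝ) (hab : a < b)
    (S V W : ℝ → ℝ)
    (hSinf : 0 < blockInf S a b) (hVinf : 0 < blockInf V a b)
    (hWinf : 0 < blockInf W a b)
    (hVbd : BddAbove (V '' Set.Ioo a b))
    (hWbd : BddAbove (W '' Set.Ioo a b))
    (hVint : IntervalIntegrable V volume a b)
    (hWint : IntervalIntegrable W volume a b)
    (hΓint : IntervalIntegrable (fun t => Γ (S t) (V t) (W t)) volume a b)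
    (ξ : ℝ) (hξ : 1 ≤ ξ)
    (hSsm : blockSup S a b ≤ ξ * blockInf S a b)
    (hVsm : blockSup V a b ≤ ξ * blockInf V a b)
    (hWsm : blockSup W a b ≤ ξ * blockInf W a b)
    (sb : ℝ) (hsb₁ : blockInf S a b ≤ sb) (hsb₂ : sb ≤ blockSup S a b) :
    Γ sb (∫ t in a..b, V t) (∫ t in a..b, W t) ≤
      ξ ^ 2 * ∫ t in a..b, Γ (S t) (V t) (W t) := by
  have hΓ_inf : (b - a) * Γ (blockInf S a b) (blockInf V a b) (blockInf W a b) ≤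
      ∫ t in a..b, Γ (S t) (V t) (W t) :=
    mul_le_intervalIntegral_of_le_Ioo hab.le hΓint fun _ ht =>
      hmono _ _ _ _ _ _ hSinf hVinf hWinf
        (blockInf_le hSinf ht) (blockInf_le hVinf ht) (blockInf_le hWinf ht)
  calc Γ sb (∫ t in a..b, V t) (∫ t in a..b, W t)
      ≤ ξ ^ 2 * ((b - a) * Γ (blockInf S a b) (blockInf V a b) (blockInf W a b)) :=
        le_sq_mul_of_le_mul Γ hmono hhom hsub hξ (sub_pos.2 hab) hSinf hVinf hWinf
          (hSinf.trans_le hsb₁) (intervalIntegral_pos_of_blockInf_pos hab hVint hVinf)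
          (intervalIntegral_pos_of_blockInf_pos hab hWint hWinf) (hsb₂.trans hSsm)
          (intervalIntegral_le_mul_blockInf hab.le hVint hVbd hVsm)
          (intervalIntegral_le_mul_blockInf hab.le hWint hWbd hWsm)
    _ ≤ ξ ^ 2 * ∫ t in a..b, Γ (S t) (V t) (W t) := by gcongr

/-- Per-block adversarial bound: for Γ monotone, homogeneous in (V,W) and
subhomogeneous in S, and ξ-smooth resources on a block (a,b), any recorded
space value s_b between the inf and sup of S satisfies
Γ(s_b, ∫V, ∫W) ≤ ξ²·∫ Γ(S(t),V(t),W(t)) dt. -/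
theorem stmt_14 (Γ : ℝ → ℝ → ℝ → ℝ)
    (hmono : ∀ s v w s' v' w' : ℝ, 0 < s → 0 < v → 0 < w →
      s ≤ s' → v ≤ v' → w ≤ w' → Γ s v w ≤ Γ s' v' w')
    (hhom : ∀ s v w α : ℝ, 0 < s → 0 < v → 0 < w → 0 < α →
      Γ s (α * v) (α * w) = α * Γ s v w)
    (hsub : ∀ s v w α : ℝ, 0 < s → 0 < v → 0 < w → 1 ≤ α →
      Γ (α * s) v w ≤ α * Γ s v w)
    (a b : ℝ) (hab : a < b)
    (S V W : ℝ → ℝ)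
    (hSpos : ∀ t ∈ Set.Ioo a b, 0 < S t)
    (hVpos : ∀ t ∈ Set.Ioo a b, 0 < V t)
    (hWpos : ∀ t ∈ Set.Ioo a b, 0 < W t)
    (hSinf : 0 < blockInf S a b) (hVinf : 0 < blockInf V a b)
    (hWinf : 0 < blockInf W a b)
    (hSbd : BddAbove (S '' Set.Ioo a b)) (hVbd : BddAbove (V '' Set.Ioo a b))
    (hWbd : BddAbove (W '' Set.Ioo a b))
    (hVint : IntervalIntegrable V volume a b)
    (hWint : IntervalIntegrable W volume a b)
    (hΓint : IntervalIntegrable (fun t => Γ (S t) (V t) (W t)) volume a b)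
    (ξ : ℝ) (hξ : 1 ≤ ξ)
    (hSsm : blockSup S a b ≤ ξ * blockInf S a b)
    (hVsm : blockSup V a b ≤ ξ * blockInf V a b)
    (hWsm : blockSup W a b ≤ ξ * blockInf W a b)
    (sb : ℝ) (hsb₁ : blockInf S a b ≤ sb) (hsb₂ : sb ≤ blockSup S a b) :
    Γ sb (∫ t in a..b, V t) (∫ t in a..b, W t) ≤
      ξ ^ 2 * ∫ t in a..b, Γ (S t) (V t) (W t) :=
  stmt_14_general Γ hmono hhom hsub a b hab S V W hSinf hVinf hWinf hVbd hWbd hVint hWint hΓint ξ hξ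
    hSsm hVsm hWsm sb hsb₁ hsb₂
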